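/- Let 𝓕 be the free associative ℂ(t)-algebra on a finite set of generators y_i, graded by assigning to each y_i a positive integer degree (so the degree-n component 𝓕_n is the ℂ(t)-span of the words of total weight n). Let B be a finite set of homogeneous elements of 𝓕 all of whose coordinates with respect to the basis of words are rational functions regular at t=0, and let B_0 be the set of their entrywise evaluations at t=0 (regarded again as elements of 𝓕). Then for every n ≥ 0, dim_{ℂ(t)} ⟨B⟩_n ≥ dim_{ℂ(t)} ⟨B_0⟩_n, where ⟨S⟩_n denotes the degree-n homogeneous component of the two-sided ideal of 𝓕 generated by S. -/

import Mathlib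

noncomputable section

/-- The field `ℂ(t)` of rational functions. -/
abbrev Kt := RatFunc ℂ

/-- A rational function `f ∈ ℂ(t)` is regular at `t = 0` (has no pole at `0`). -/
def RegularAtZero (f : Kt) : Prop := Polynomial.eval 0 f.denom ≠ 0

/-- The evaluation of a rational function at `t = 0`, regarded again as a (constant)
element of `ℂ(t)`. -/
def evalZero (f : Kt) : Kt := RatFunc.C (RatFunc.eval (RingHom.id ℂ) 0 f)

/-- The total weight of a word, for the given degrees of the generators. -/
def wordWeight {N : ℕ} (d : Fin N → ℕ) (w : FreeMonoid (Fin N)) : ℕ :=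
  (w.toList.map d).sum

/-- The degree-`n` homogeneous component of the free algebra, for the grading in which the
generator `y_i` has degree `d i`: the span of the words of total weight `n`. -/
def homComponent {N : ℕ} (d : Fin N → ℕ) (n : ℕ) : Submodule Kt (FreeAlgebra Kt (Fin N)) :=
  Submodule.span Kt
    ((FreeAlgebra.basisFreeMonoid Kt (Fin N)) '' { w | wordWeight d w = n })

/-- The two-sided ideal of the free algebra generated by a set `S`, as a `ℂ(t)`-submodule:
the span of all elements `x * r * y` with `r ∈ S`. -/
def twoSidedSpan {N : ℕ} (S : Set (FreeAlgebra Kt (Fin N))) :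
    Submodule Kt (FreeAlgebra Kt (Fin N)) :=
  Submodule.span Kt { z | ∃ x r y, r ∈ S ∧ z = x * r * y }

/-!
The degree-`n` part of the ideal generated by homogeneous elements `c i` is spanned by the finitely
many sandwiches `w * c i * w'` (`w`, `w'` words) of total weight `n`. The sandwiches of `b₀` are the
entrywise specializations at `t = 0` of those of `b`, so it suffices that specialization cannot
raise the rank of a finite family with coordinates regular at `0`. Indeed, a nontrivial relation
among the original vectors, divided by a coefficient of largest `X`-adic valuation, has regular
coefficients one of which is `1`, and so specializes to a nontrivial relation.
-/

open Polynomial Module Submodule Set IsDedekindDomain.HeightOneSpectrum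

theorem regularAtZero_zero : RegularAtZero 0 := by
  simp [RegularAtZero]

theorem RegularAtZero.add {f g : Kt} (hf : RegularAtZero f) (hg : RegularAtZero g) :
    RegularAtZero (f + g) := by
  have h : eval 0 (f + g).denom ∣ eval 0 f.denom * eval 0 g.denom := by
    simpa using _root_.map_dvd (evalRingHom 0) (RatFunc.denom_add_dvd f g)
  exact fun h0 => mul_ne_zero hf hg (zero_dvd_iff.1 (by rwa [h0] at h))

theorem RegularAtZero.mul {f g : Kt} (hf : RegularAtZero f) (hg : RegularAtZero g) :
    RegularAtZero (f * g) := by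
  have h : eval 0 (f * g).denom ∣ eval 0 f.denom * eval 0 g.denom := by
    simpa using _root_.map_dvd (evalRingHom 0) (RatFunc.denom_mul_dvd f g)
  exact fun h0 => mul_ne_zero hf hg (zero_dvd_iff.1 (by rwa [h0] at h))

theorem evalZero_zero : evalZero 0 = 0 := by
  simp [evalZero]

theorem evalZero_one : evalZero 1 = 1 := by
  simp [evalZero]

theorem evalZero_add {f g : Kt} (hf : RegularAtZero f) (hg : RegularAtZero g) :
    evalZero (f + g) = evalZero f + evalZero g := by
  rw [evalZero, RatFunc.eval_add (hx := hf) (hy := hg), map_add, evalZero, evalZero]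

theorem evalZero_mul {f g : Kt} (hf : RegularAtZero f) (hg : RegularAtZero g) :
    evalZero (f * g) = evalZero f * evalZero g := by
  rw [evalZero, RatFunc.eval_mul (hx := hf) (hy := hg), map_mul, evalZero, evalZero]

theorem regularAtZero_sum {α : Type*} (s : Finset α) {f : α → Kt}
    (hf : ∀ a ∈ s, RegularAtZero (f a)) : RegularAtZero (∑ a ∈ s, f a) := by
  classical
  induction s using Finset.induction_on with
  | empty => simpa using regularAtZero_zero
  | insert a s ha ih =>
    rw [Finset.sum_insert ha]
    simp only [Finset.mem_insert, forall_eq_or_imp] at hf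
    exact hf.1.add (ih hf.2)

theorem evalZero_sum {α : Type*} (s : Finset α) {f : α → Kt}
    (hf : ∀ a ∈ s, RegularAtZero (f a)) :
    evalZero (∑ a ∈ s, f a) = ∑ a ∈ s, evalZero (f a) := by
  classical
  induction s using Finset.induction_on with
  | empty => simpa using evalZero_zero
  | insert a s ha ih =>
    simp only [Finset.mem_insert, forall_eq_or_imp] at hf
    rw [Finset.sum_insert ha, Finset.sum_insert ha, evalZero_add hf.1 (regularAtZero_sum s hf.2),
      ih hf.2]

theorem regularAtZero_of_valuation_le_one {f : Kt}
    (hf : (idealX ℂ).valuation Kt f ≤ 1) : RegularAtZero f := by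
  by_contra h
  have hX_denom : X ∣ f.denom := by
    rw [X_dvd_iff, coeff_zero_eq_eval_zero]; exact not_not.1 h
  have hX_num : ¬ X ∣ f.num := fun hX =>
    not_isUnit_X ((RatFunc.isCoprime_num_denom f).isUnit_of_dvd' hX hX_denom)
  have hv_num : (idealX ℂ).intValuation f.num = 1 := by
    simpa [intValuation_eq_one_iff, Ideal.mem_span_singleton] using hX_num
  have hv_denom : (idealX ℂ).intValuation f.denom < 1 := by
    simpa [intValuation_lt_one_iff_mem, Ideal.mem_span_singleton] using hX_denom
  rw [← RatFunc.num_div_denom f, map_div₀, valuation_of_algebraMap, valuation_of_algebraMap,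
    hv_num, one_div, inv_le_one₀ (zero_lt_iff.2 (intValuation_ne_zero _ _ f.denom_ne_zero))] at hf
  exact absurd hf (not_le.2 hv_denom)

theorem exists_regularAtZero_div {σ : Type*} [Finite σ] {g : σ → Kt} (hg : g ≠ 0) :
    ∃ x₁, g x₁ ≠ 0 ∧ ∀ x, RegularAtZero (g x / g x₁) := by
  obtain ⟨x₀, hx₀⟩ := Function.ne_iff.1 hg
  have : Nonempty σ := ⟨x₀⟩
  obtain ⟨x₁, hx₁⟩ := Finite.exists_max fun x => (idealX ℂ).valuation Kt (g x)
  have hgx₁ : g x₁ ≠ 0 := fun h0 => hx₀ <| by simpa [h0] using hx₁ x₀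
  refine ⟨x₁, hgx₁, fun x => regularAtZero_of_valuation_le_one ?_⟩
  rw [map_div₀]
  exact div_le_one_of_le₀ (hx₁ x) zero_le

section Specialization

variable {κ M σ : Type*} [AddCommGroup M] [Module Kt M] (B : Basis κ Kt M) {u u₀ : σ → M}

theorem linearIndependent_of_specialization [Finite σ]
    (hreg : ∀ j k, RegularAtZero (B.repr (u j) k))
    (hspec : ∀ j, B.repr (u₀ j) = (B.repr (u j)).mapRange evalZero evalZero_zero)
    (hli : LinearIndependent Kt u₀) : LinearIndependent Kt u := by
  have := Fintype.ofFinite σ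
  rw [Fintype.linearIndependent_iff]
  by_contra! ⟨g, hg, hg0⟩
  obtain ⟨x₁, hgx₁, hc⟩ := exists_regularAtZero_div (Function.ne_iff.2 hg0)
  set c := fun x => g x / g x₁
  have hrel : ∑ x, c x • u x = 0 := by
    simp only [c, div_eq_mul_inv, mul_comm _ (g x₁)⁻¹, ← smul_smul, ← Finset.smul_sum, hg,
      smul_zero]
  have hrel₀ : ∑ x, evalZero (c x) • u₀ x = 0 := by
    refine B.ext_elem fun k => ?_
    have hk := congr(B.repr $hrel k)
    simp only [map_sum, map_smul, Finsupp.coe_finsetSum, Finset.sum_apply, Finsupp.smul_apply,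
      smul_eq_mul, map_zero, Finsupp.coe_zero, Pi.zero_apply] at hk ⊢
    simp only [hspec, Finsupp.mapRange_apply]
    rw [← evalZero_zero, ← hk, evalZero_sum _ fun x _ => (hc x).mul (hreg x k)]
    exact Finset.sum_congr rfl fun x _ => (evalZero_mul (hc x) (hreg x k)).symm
  have hc₁ := Fintype.linearIndependent_iff.1 hli _ hrel₀ x₁
  rw [show c x₁ = 1 from div_self hgx₁, evalZero_one] at hc₁
  exact one_ne_zero hc₁

theorem finrank_span_range_le_of_specialization [Finite σ]
    (hreg : ∀ j k, RegularAtZero (B.repr (u j) k))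
    (hspec : ∀ j, B.repr (u₀ j) = (B.repr (u j)).mapRange evalZero evalZero_zero) :
    finrank Kt (span Kt (range u₀)) ≤ finrank Kt (span Kt (range u)) := by
  obtain ⟨ι, a, ha, hspan, hli⟩ := exists_linearIndependent' Kt u₀
  have := Finite.of_injective a ha
  have := Fintype.ofFinite ι
  have := FiniteDimensional.span_of_finite Kt (finite_range u)
  have hli' : LinearIndependent Kt (u ∘ a) :=
    linearIndependent_of_specialization B (fun j => hreg (a j)) (fun j => hspec (a j)) hli
  calc finrank Kt (span Kt (range u₀)) = Fintype.card ι := by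
        rw [← hspan, finrank_span_eq_card hli]
    _ = finrank Kt (span Kt (range (u ∘ a))) := (finrank_span_eq_card hli').symm
    _ ≤ finrank Kt (span Kt (range u)) :=
        Submodule.finrank_mono (span_mono (range_comp_subset_range a u))

end Specialization

namespace FreeAlgebra

variable {R X : Type*} [CommSemiring R]

theorem basisFreeMonoid_mul (w w' : FreeMonoid X) :
    basisFreeMonoid R X w * basisFreeMonoid R X w' = basisFreeMonoid R X (w * w') := by
  have h (u : FreeMonoid X) :
      basisFreeMonoid R X u = equivMonoidAlgebraFreeMonoid.symm (MonoidAlgebra.single u 1) := rfl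
  rw [h, h, h, ← map_mul, MonoidAlgebra.single_mul_single, one_mul]

theorem basisFreeMonoid_repr_mul_mul (w w' : FreeMonoid X) (x : FreeAlgebra R X) :
    (basisFreeMonoid R X).repr (basisFreeMonoid R X w * x * basisFreeMonoid R X w') =
      ((basisFreeMonoid R X).repr x).embDomain
        ((mulLeftEmbedding w).trans (mulRightEmbedding w')) := by
  let L₁ : FreeAlgebra R X →ₗ[R] FreeMonoid X →₀ R := (basisFreeMonoid R X).repr.toLinearMap ∘ₗ
    LinearMap.mulRight R (basisFreeMonoid R X w') ∘ₗ LinearMap.mulLeft R (basisFreeMonoid R X w)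
  let L₂ : FreeAlgebra R X →ₗ[R] FreeMonoid X →₀ R :=
    Finsupp.lmapDomain R R (fun u => w * u * w') ∘ₗ (basisFreeMonoid R X).repr.toLinearMap
  have : L₁ = L₂ := (basisFreeMonoid R X).ext fun u => by simp [L₁, L₂, basisFreeMonoid_mul]
  rw [Finsupp.embDomain_eq_mapDomain]
  exact congr($this x)

end FreeAlgebra

section Graded

variable {N : ℕ} (d : Fin N → ℕ)

local notation "𝔹" => FreeAlgebra.basisFreeMonoid Kt (Fin N)

theorem wordWeight_mul (w w' : FreeMonoid (Fin N)) :
    wordWeight d (w * w') = wordWeight d w + wordWeight d w' := by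
  simp [wordWeight, FreeMonoid.toList_mul]

theorem finite_setOf_wordWeight_le (hd : ∀ i, 0 < d i) (n : ℕ) :
    {w : FreeMonoid (Fin N) | wordWeight d w ≤ n}.Finite := by
  refine ((List.finite_length_le (Fin N) n).preimage FreeMonoid.toList.injective.injOn).subset
    fun w (hw : wordWeight d w ≤ n) => ?_
  calc w.toList.length = (w.toList.map d).length := (List.length_map _).symm
    _ ≤ wordWeight d w := List.length_le_sum_of_one_le _ (List.forall_mem_map.2 fun i _ => hd i)
    _ ≤ n := hw

theorem finiteDimensional_homComponent (hd : ∀ i, 0 < d i) (n : ℕ) :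
    FiniteDimensional Kt (homComponent d n) :=
  FiniteDimensional.span_of_finite Kt
    (((finite_setOf_wordWeight_le d hd n).subset fun _ => le_of_eq).image _)

theorem basisFreeMonoid_mem_homComponent (w : FreeMonoid (Fin N)) :
    𝔹 w ∈ homComponent d (wordWeight d w) :=
  subset_span ⟨w, rfl, rfl⟩

theorem mul_mem_homComponent {k l : ℕ} {x y : FreeAlgebra Kt (Fin N)}
    (hx : x ∈ homComponent d k) (hy : y ∈ homComponent d l) :
    x * y ∈ homComponent d (k + l) := by
  have h := Submodule.mul_mem_mul hx hy
  rw [homComponent, homComponent, span_mul_span] at h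
  refine span_le.2 ?_ h
  rintro _ ⟨_, ⟨w, hw, rfl⟩, _, ⟨w', hw', rfl⟩, rfl⟩
  change 𝔹 w * 𝔹 w' ∈ _
  rw [FreeAlgebra.basisFreeMonoid_mul]
  exact subset_span ⟨w * w', by simp_all [wordWeight_mul], rfl⟩

theorem mem_homComponent_iff {x : FreeAlgebra Kt (Fin N)} {n : ℕ} :
    x ∈ homComponent d n ↔ ↑((𝔹).repr x).support ⊆ {w | wordWeight d w = n} :=
  Basis.mem_span_image _

theorem mem_homComponent_of_specialization {x x₀ : FreeAlgebra Kt (Fin N)} {n : ℕ}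
    (hx : x ∈ homComponent d n)
    (hspec : (𝔹).repr x₀ = ((𝔹).repr x).mapRange evalZero evalZero_zero) :
    x₀ ∈ homComponent d n := by
  rw [mem_homComponent_iff] at hx ⊢
  rw [hspec]
  exact (Finset.coe_subset.2 Finsupp.support_mapRange).trans hx

theorem disjoint_homComponent (n : ℕ) :
    Disjoint (homComponent d n) (span Kt (𝔹 '' {w | wordWeight d w ≠ n})) :=
  (𝔹).linearIndependent.disjoint_span_image (disjoint_left.2 fun _ hw hw' => hw' hw)

theorem homComponent_le_span_ne {k n : ℕ} (h : k ≠ n) :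
    homComponent d k ≤ span Kt (𝔹 '' {w | wordWeight d w ≠ n}) :=
  span_mono (image_mono fun w (hw : wordWeight d w = k) => (hw.trans_ne h : wordWeight d w ≠ n))

theorem inf_homComponent_le {P A : Submodule Kt (FreeAlgebra Kt (Fin N))} {n : ℕ}
    (hA : A ≤ homComponent d n) (hP : P ≤ A ⊔ span Kt (𝔹 '' {w | wordWeight d w ≠ n})) :
    P ⊓ homComponent d n ≤ A :=
  calc P ⊓ homComponent d n
      ≤ (A ⊔ span Kt (𝔹 '' {w | wordWeight d w ≠ n})) ⊓ homComponent d n :=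
        inf_le_inf_right _ hP
    _ = A := by
      rw [sup_inf_assoc_of_le _ hA, inf_comm, (disjoint_homComponent d n).eq_bot, sup_bot_eq]

theorem twoSidedSpan_le_of_words {S : Set (FreeAlgebra Kt (Fin N))}
    {P : Submodule Kt (FreeAlgebra Kt (Fin N))}
    (h : ∀ r ∈ S, ∀ w w', 𝔹 w * r * 𝔹 w' ∈ P) : twoSidedSpan S ≤ P := by
  refine span_le.2 ?_
  rintro _ ⟨x, r, y, hr, rfl⟩
  have hmem := Submodule.mul_mem_mul
    (Submodule.mul_mem_mul ((𝔹).mem_span x) (mem_span_singleton_self r)) ((𝔹).mem_span y)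
  rw [span_mul_span, span_mul_span] at hmem
  refine span_le.2 ?_ hmem
  rintro _ ⟨_, ⟨_, ⟨w, rfl⟩, _, rfl, rfl⟩, _, ⟨w', rfl⟩, rfl⟩
  exact h _ hr w w'

variable {ι : Type*}

def sandwich (c : ι → FreeAlgebra Kt (Fin N))
    (p : ι × FreeMonoid (Fin N) × FreeMonoid (Fin N)) : FreeAlgebra Kt (Fin N) :=
  𝔹 p.2.1 * c p.1 * 𝔹 p.2.2

def weightedTriples (k : ι → ℕ) (n : ℕ) : Set (ι × FreeMonoid (Fin N) × FreeMonoid (Fin N)) :=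
  {p | wordWeight d p.2.1 + k p.1 + wordWeight d p.2.2 = n}

theorem finite_weightedTriples [Finite ι] (hd : ∀ i, 0 < d i) (k : ι → ℕ) (n : ℕ) :
    (weightedTriples d k n).Finite := by
  refine (finite_univ.prod ((finite_setOf_wordWeight_le d hd n).prod
    (finite_setOf_wordWeight_le d hd n))).subset ?_
  rintro ⟨i, w, w'⟩ (hp : wordWeight d w + k i + wordWeight d w' = n)
  exact ⟨mem_univ i, (by omega : wordWeight d w ≤ n), (by omega : wordWeight d w' ≤ n)⟩

variable {d} {c c₀ : ι → FreeAlgebra Kt (Fin N)} {k : ι → ℕ}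

theorem sandwich_mem_homComponent (hc : ∀ i, c i ∈ homComponent d (k i))
    (p : ι × FreeMonoid (Fin N) × FreeMonoid (Fin N)) :
    sandwich c p ∈ homComponent d (wordWeight d p.2.1 + k p.1 + wordWeight d p.2.2) :=
  mul_mem_homComponent d (mul_mem_homComponent d (basisFreeMonoid_mem_homComponent d _) (hc _))
    (basisFreeMonoid_mem_homComponent d _)

theorem span_sandwich_le (hc : ∀ i, c i ∈ homComponent d (k i)) (n : ℕ) :
    span Kt (sandwich c '' weightedTriples d k n) ≤ twoSidedSpan (range c) ⊓ homComponent d n := by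
  refine span_le.2 ?_
  rintro _ ⟨p, hp, rfl⟩
  exact ⟨subset_span ⟨_, _, _, mem_range_self p.1, rfl⟩, hp ▸ sandwich_mem_homComponent hc p⟩

theorem twoSidedSpan_inf_homComponent_le (hc : ∀ i, c i ∈ homComponent d (k i)) (n : ℕ) :
    twoSidedSpan (range c) ⊓ homComponent d n ≤ span Kt (sandwich c '' weightedTriples d k n) := by
  refine inf_homComponent_le d ((span_sandwich_le hc n).trans inf_le_right)
    (twoSidedSpan_le_of_words ?_)
  rintro _ ⟨i, rfl⟩ w w'
  by_cases hn : wordWeight d w + k i + wordWeight d w' = n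
  · exact mem_sup_left (subset_span ⟨(i, w, w'), hn, rfl⟩)
  · exact mem_sup_right (homComponent_le_span_ne d hn (sandwich_mem_homComponent hc (i, w, w')))

theorem regularAtZero_repr_sandwich (hreg : ∀ i w, RegularAtZero ((𝔹).repr (c i) w))
    (p : ι × FreeMonoid (Fin N) × FreeMonoid (Fin N)) (w : FreeMonoid (Fin N)) :
    RegularAtZero ((𝔹).repr (sandwich c p) w) := by
  classical
  rw [sandwich, FreeAlgebra.basisFreeMonoid_repr_mul_mul, Finsupp.embDomain_apply]
  split_ifs
  exacts [hreg _ _, regularAtZero_zero]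

theorem repr_sandwich_specialization
    (hspec : ∀ i, (𝔹).repr (c₀ i) = ((𝔹).repr (c i)).mapRange evalZero evalZero_zero)
    (p : ι × FreeMonoid (Fin N) × FreeMonoid (Fin N)) :
    (𝔹).repr (sandwich c₀ p) = ((𝔹).repr (sandwich c p)).mapRange evalZero evalZero_zero := by
  simp only [sandwich, FreeAlgebra.basisFreeMonoid_repr_mul_mul, hspec,
    Finsupp.embDomain_mapRange]

end Graded

/-- **Specialization of graded ideals in a free algebra.**
Let `𝓕` be the free algebra on finitely many generators `y_i` of positive degrees `d i`, let
`b_1, …, b_m` be homogeneous elements whose coordinates (in the basis of words) are all regular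
at `t = 0`, and let `b₀` be the family of their entrywise evaluations at `t = 0`.  Then for every
`n`, `dim ⟨b⟩_n ≥ dim ⟨b₀⟩_n`. -/
theorem graded_ideal_specialization {N m : ℕ}
    (d : Fin N → ℕ) (hd : ∀ i, 0 < d i)
    (b b₀ : Fin m → FreeAlgebra Kt (Fin N))
    (hhom : ∀ i, ∃ n, b i ∈ homComponent d n)
    (hreg : ∀ (i : Fin m) (w : FreeMonoid (Fin N)),
      RegularAtZero ((FreeAlgebra.basisFreeMonoid Kt (Fin N)).repr (b i) w))
    (hb₀ : ∀ (i : Fin m) (w : FreeMonoid (Fin N)),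
      (FreeAlgebra.basisFreeMonoid Kt (Fin N)).repr (b₀ i) w
        = evalZero ((FreeAlgebra.basisFreeMonoid Kt (Fin N)).repr (b i) w))
    (n : ℕ) :
    Module.finrank Kt ↥(twoSidedSpan (Set.range b₀) ⊓ homComponent d n)
      ≤ Module.finrank Kt ↥(twoSidedSpan (Set.range b) ⊓ homComponent d n) := by
  choose k hk using hhom
  have hspec (i : Fin m) : (FreeAlgebra.basisFreeMonoid Kt (Fin N)).repr (b₀ i) =
      ((FreeAlgebra.basisFreeMonoid Kt (Fin N)).repr (b i)).mapRange evalZero evalZero_zero :=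
    Finsupp.ext (hb₀ i)
  have hk₀ (i : Fin m) : b₀ i ∈ homComponent d (k i) :=
    mem_homComponent_of_specialization d (hk i) (hspec i)
  have hT := finite_weightedTriples d hd k n
  have := hT.to_subtype
  have := FiniteDimensional.span_of_finite Kt (hT.image (sandwich b₀))
  have := finiteDimensional_homComponent d hd n
  calc finrank Kt ↥(twoSidedSpan (range b₀) ⊓ homComponent d n)
      ≤ finrank Kt (span Kt (sandwich b₀ '' weightedTriples d k n)) :=
        Submodule.finrank_mono (twoSidedSpan_inf_homComponent_le hk₀ n)
    _ ≤ finrank Kt (span Kt (sandwich b '' weightedTriples d k n)) := by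
      rw [image_eq_range, image_eq_range]
      exact finrank_span_range_le_of_specialization _ (fun _ => regularAtZero_repr_sandwich hreg _)
        (fun _ => repr_sandwich_specialization hspec _)
    _ ≤ _ := Submodule.finrank_mono (span_sandwich_le hk n)

end
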